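/- For every linear order ≤₁ on ℕ and every a ∈ 2^ℕ, there exists a linear order ≤₂ on ℕ isomorphic to ≤₁ such that ≤₂ Turing-computes a, Turing-computes ≤₁, and Turing-computes an isomorphism between ≤₁ and ≤₂. -/

import Mathlib

/-- Partial functions `ℕ →. ℕ` recursive in an oracle `O : ℕ → ℕ`. -/
inductive RecursiveInOracle (O : ℕ → ℕ) : (ℕ →. ℕ) → Prop
  | oracle : RecursiveInOracle O O
  | zero : RecursiveInOracle O (fun _ => 0)
  | succ : RecursiveInOracle O Nat.succ
  | left : RecursiveInOracle O (fun n => (Nat.unpair n).1)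
  | right : RecursiveInOracle O (fun n => (Nat.unpair n).2)
  | pair {f g : ℕ →. ℕ} : RecursiveInOracle O f → RecursiveInOracle O g →
      RecursiveInOracle O (fun n => Nat.pair <$> f n <*> g n)
  | comp {f g : ℕ →. ℕ} : RecursiveInOracle O f → RecursiveInOracle O g →
      RecursiveInOracle O (fun n => g n >>= f)
  | prec {f g : ℕ →. ℕ} : RecursiveInOracle O f → RecursiveInOracle O g →
      RecursiveInOracle O (Nat.unpaired fun a n =>
        n.rec (f a) fun y IH => do let i ← IH; g (Nat.pair a (Nat.pair y i)))
  | rfind {f : ℕ →. ℕ} : RecursiveInOracle O f →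
      RecursiveInOracle O (fun a => Nat.rfind fun n => (fun m => m = 0) <$> f (Nat.pair a n))

/-- The characteristic function (with values in `ℕ`) of an element of Cantor space. -/
def toNatFun (x : ℕ → Bool) : ℕ → ℕ := fun n => cond (x n) 1 0

/-- Turing reducibility between elements of Cantor space. -/
def TuringLE (x y : ℕ → Bool) : Prop := RecursiveInOracle (toNatFun y) (toNatFun x)

/-- The recursive join of two elements of Cantor space. -/
def join (x y : ℕ → Bool) : ℕ → Bool := fun n => if n % 2 = 0 then x (n / 2) else y (n / 2)

/-- The characteristic function of a binary relation on `ℕ`, as an element of Cantor space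
(via the standard pairing function). -/
noncomputable def chiRel (L : ℕ → ℕ → Prop) : ℕ → Bool := fun n =>
  @decide (L (Nat.unpair n).1 (Nat.unpair n).2) (Classical.dec _)

/-!
Put `c = a ⊕ ≤₁` and reorder `≤₁` by exchanging `2n` and `2n + 1` exactly where `c` and `≤₁`
disagree at `n`. In the resulting order `≤₂`, the element `2n + 1` precedes `2n` iff `c n = true`,
so `≤₂` computes `c`, hence `a` and `≤₁`; from `c` and `≤₁` it then computes the set of
disagreements, and with it the exchanging isomorphism.
-/

namespace RecursiveInOracle

variable {O : ℕ → ℕ}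

theorem of_partrec {f : ℕ →. ℕ} (h : Nat.Partrec f) : RecursiveInOracle O f := by
  induction h with
  | zero => exact .zero
  | succ => exact .succ
  | left => exact .left
  | right => exact .right
  | pair _ _ ihf ihg => exact .pair ihf ihg
  | comp _ _ ihf ihg => exact .comp ihf ihg
  | prec _ _ ihf ihg => exact .prec ihf ihg
  | rfind _ ih => exact .rfind ih

theorem trans {O' : ℕ → ℕ} {f : ℕ →. ℕ} (hf : RecursiveInOracle O f)
    (hO : RecursiveInOracle O' O) : RecursiveInOracle O' f := by
  induction hf with
  | oracle => exact hO
  | zero => exact .zero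
  | succ => exact .succ
  | left => exact .left
  | right => exact .right
  | pair _ _ ihf ihg => exact .pair ihf ihg
  | comp _ _ ihf ihg => exact .comp ihf ihg
  | prec _ _ ihf ihg => exact .prec ihf ihg
  | rfind _ ih => exact .rfind ih

theorem primrec_comp {g f : ℕ → ℕ} (hg : Primrec g)
    (hf : RecursiveInOracle O fun n => Part.some (f n)) :
    RecursiveInOracle O fun n => Part.some (g (f n)) := by
  have h := RecursiveInOracle.comp (of_partrec (Nat.Partrec.of_primrec (Primrec.nat_iff.mp hg))) hf
  exact (congrArg (RecursiveInOracle O) (funext fun _ => Part.bind_some _ _)).mp h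

theorem oracle_comp {q : ℕ → ℕ} (hq : Primrec q) :
    RecursiveInOracle O fun n => Part.some (O (q n)) := by
  have h := RecursiveInOracle.comp (f := O) .oracle
    (of_partrec (Nat.Partrec.of_primrec (Primrec.nat_iff.mp hq)))
  exact (congrArg (RecursiveInOracle O) (funext fun _ => Part.bind_some _ _)).mp h

theorem primrec₂_comp {g : ℕ → ℕ → ℕ} {f₁ f₂ : ℕ → ℕ} (hg : Primrec₂ g)
    (hf₁ : RecursiveInOracle O fun n => Part.some (f₁ n))
    (hf₂ : RecursiveInOracle O fun n => Part.some (f₂ n)) :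
    RecursiveInOracle O fun n => Part.some (g (f₁ n) (f₂ n)) := by
  have hpair : RecursiveInOracle O fun n => Part.some (Nat.pair (f₁ n) (f₂ n)) := by
    convert RecursiveInOracle.pair hf₁ hf₂ using 2
    simp [Seq.seq]
  have hg' : Primrec fun p => g (Nat.unpair p).1 (Nat.unpair p).2 :=
    hg.comp (Primrec.fst.comp Primrec.unpair) (Primrec.snd.comp Primrec.unpair)
  simpa using primrec_comp hg' hpair

theorem id : RecursiveInOracle O Part.some :=
  of_partrec (Nat.Partrec.of_primrec Nat.Primrec.id)

end RecursiveInOracle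

namespace TuringLE

variable {x y z : ℕ → Bool}

theorem refl (x : ℕ → Bool) : TuringLE x x := RecursiveInOracle.oracle

theorem trans (hxy : TuringLE x y) (hyz : TuringLE y z) : TuringLE x z :=
  RecursiveInOracle.trans hxy hyz

theorem comp_primrec {q : ℕ → ℕ} (hq : Primrec q) : TuringLE (fun n => x (q n)) x :=
  RecursiveInOracle.oracle_comp hq

theorem left_join : TuringLE x (join x y) := by
  convert comp_primrec (x := join x y) Primrec.nat_double using 1
  ext n
  simp [join]

theorem right_join : TuringLE y (join x y) := by
  convert comp_primrec (x := join x y) Primrec.nat_double_succ using 1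
  ext n
  have : (2 * n + 1) / 2 = n := by omega
  simp [join, Nat.add_mod, this]

theorem xor (hx : TuringLE x z) (hy : TuringLE y z) : TuringLE (fun n => x n ^^ y n) z := by
  have hg : Primrec₂ fun u v : ℕ => if u = v then 0 else 1 :=
    Primrec.ite (Primrec.eq.comp Primrec.fst Primrec.snd) (Primrec.const 0) (Primrec.const 1)
  unfold TuringLE
  refine (congrArg _ (funext fun n => ?_)).mpr (RecursiveInOracle.primrec₂_comp hg hx hy)
  simp only [PFun.coe_val, toNatFun]
  by_cases hxn : x n <;> by_cases hyn : y n <;> simp [hxn, hyn]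

end TuringLE

def swapPair (k : ℕ) : ℕ := if k % 2 = 0 then k + 1 else k - 1

theorem swapPair_div_two (k : ℕ) : swapPair k / 2 = k / 2 := by
  unfold swapPair; split_ifs <;> omega

theorem swapPair_involutive : Function.Involutive swapPair := by
  intro k; unfold swapPair; split_ifs <;> omega

theorem primrec_swapPair : Primrec swapPair :=
  Primrec.ite
    (Primrec.eq.comp (Primrec.nat_mod.comp Primrec.id (Primrec.const 2)) (Primrec.const 0))
    Primrec.succ (Primrec.nat_sub.comp Primrec.id (Primrec.const 1))

def swapBlocks (s : ℕ → Bool) (k : ℕ) : ℕ := if s (k / 2) then swapPair k else k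

section swapBlocks

variable (s : ℕ → Bool)

theorem swapBlocks_involutive : Function.Involutive (swapBlocks s) := by
  intro k
  by_cases h : s (k / 2) <;> simp [swapBlocks, h, swapPair_div_two, swapPair_involutive k]

theorem swapBlocks_two_mul (m : ℕ) : swapBlocks s (2 * m) = if s m then 2 * m + 1 else 2 * m := by
  simp [swapBlocks, swapPair]

theorem swapBlocks_two_mul_add_one (m : ℕ) :
    swapBlocks s (2 * m + 1) = if s m then 2 * m else 2 * m + 1 := by
  have : (2 * m + 1) / 2 = m := by omega
  simp [swapBlocks, swapPair, this, Nat.add_mod]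

theorem recursiveInOracle_swapBlocks {x : ℕ → Bool} (hs : TuringLE s x) :
    RecursiveInOracle (toNatFun x) fun k => Part.some (swapBlocks s k) := by
  have hg : Primrec₂ fun k b : ℕ => if b = 0 then k else swapPair k :=
    Primrec.ite (Primrec.eq.comp Primrec.snd (Primrec.const 0)) Primrec.fst
      (primrec_swapPair.comp Primrec.fst)
  have hsk : RecursiveInOracle (toNatFun x) fun k => Part.some (toNatFun s (k / 2)) :=
    RecursiveInOracle.trans
      (RecursiveInOracle.oracle_comp (Primrec.nat_div.comp Primrec.id (Primrec.const 2))) hs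
  refine (congrArg _ (funext fun k => ?_)).mpr
    (RecursiveInOracle.primrec₂_comp hg RecursiveInOracle.id hsk)
  cases h : s (k / 2) <;> simp [swapBlocks, toNatFun, h]

end swapBlocks

noncomputable def oddFirst (L : ℕ → ℕ → Prop) (n : ℕ) : Bool :=
  chiRel L (Nat.pair (2 * n + 1) (2 * n))

theorem oddFirst_eq_true {L : ℕ → ℕ → Prop} {n : ℕ} :
    oddFirst L n = true ↔ L (2 * n + 1) (2 * n) := by
  simp [oddFirst, chiRel]

theorem turingLE_oddFirst (L : ℕ → ℕ → Prop) : TuringLE (oddFirst L) (chiRel L) :=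
  TuringLE.comp_primrec (Primrec₂.natPair.comp Primrec.nat_double_succ Primrec.nat_double)

theorem oddFirst_preimage_swapBlocks (s : ℕ → Bool) {L : ℕ → ℕ → Prop}
    (hL : IsLinearOrder ℕ L) (n : ℕ) :
    oddFirst (swapBlocks s ⁻¹'o L) n = (s n ^^ oddFirst L n) := by
  rw [Bool.eq_iff_iff, oddFirst_eq_true]
  cases h : s n
  · simp [Order.Preimage, swapBlocks_two_mul, swapBlocks_two_mul_add_one, h,
      oddFirst_eq_true]
  · have hne : 2 * n ≠ 2 * n + 1 := by omega
    have : L (2 * n) (2 * n + 1) ↔ ¬ L (2 * n + 1) (2 * n) :=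
      ⟨fun h₁ h₂ => hne (hL.antisymm _ _ h₁ h₂), (hL.total _ _).resolve_right⟩
    simp [Order.Preimage, swapBlocks_two_mul, swapBlocks_two_mul_add_one, h, this,
      ← oddFirst_eq_true]

/-- The paper's "`c` and `≤` disagree at `n`". -/
noncomputable def disagree (L : ℕ → ℕ → Prop) (c : ℕ → Bool) (n : ℕ) : Bool :=
  c n ^^ oddFirst L n

theorem oddFirst_preimage_swapBlocks_disagree {L : ℕ → ℕ → Prop} (hL : IsLinearOrder ℕ L)
    (c : ℕ → Bool) : oddFirst (swapBlocks (disagree L c) ⁻¹'o L) = c := by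
  funext n
  rw [oddFirst_preimage_swapBlocks _ hL, disagree, Bool.xor_assoc, Bool.xor_self, Bool.xor_false]

/-- For every linear order `≤₁` on `ℕ` and every `a ∈ 2^ℕ` there is a linear order `≤₂` on
`ℕ` isomorphic to `≤₁` which Turing-computes `a`, Turing-computes `≤₁`, and
Turing-computes an isomorphism between `≤₁` and `≤₂`. -/
theorem stmt6 (L₁ : ℕ → ℕ → Prop) (h₁ : IsLinearOrder ℕ L₁) (a : ℕ → Bool) :
    ∃ L₂ : ℕ → ℕ → Prop, IsLinearOrder ℕ L₂ ∧
      TuringLE a (chiRel L₂) ∧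
      TuringLE (chiRel L₁) (chiRel L₂) ∧
      ∃ e : ℕ ≃ ℕ, (∀ m n : ℕ, L₂ m n ↔ L₁ (e m) (e n)) ∧
        RecursiveInOracle (toNatFun (chiRel L₂)) (fun n => Part.some (e n)) := by
  set c := join a (chiRel L₁)
  set L₂ := swapBlocks (disagree L₁ c) ⁻¹'o L₁
  have hc : TuringLE c (chiRel L₂) :=
    (congrArg (TuringLE · _) (oddFirst_preimage_swapBlocks_disagree h₁ c)).mp
      (turingLE_oddFirst L₂)
  have hdisagree : TuringLE (disagree L₁ c) c :=
    .xor (.refl c) ((turingLE_oddFirst L₁).trans .right_join)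
  let e := (swapBlocks_involutive (disagree L₁ c)).toPerm
  exact ⟨L₂, (RelIso.preimage e L₁).toRelEmbedding.isLinearOrder, .trans .left_join hc,
    .trans .right_join hc, e, fun _ _ => Iff.rfl,
    recursiveInOracle_swapBlocks _ (hdisagree.trans hc)⟩
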